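/- Let μ ∈ ℝ, let 0 < ε < 1/2, let σ > 0 and σ₀ > 0 satisfy ∫₀¹ Φ(−|μ − log u|/σ₀) du = ε and ∫₀¹ Φ(−|μ − log u|/σ) du ≤ ε, let C > 0, let Z be a standard normal random variable, and let q ∈ ℝ satisfy Φ(q) = 3/4. Then the interquartile range of X = C e^{σZ} satisfies IQR(X) ≤ 2C sinh(q σ₀). -/

import Mathlib

/-!
The error `E(μ, σ)` is strictly increasing in `σ`, because `Φ(-a/σ)` increases with `σ` for every
`a > 0`; hence `E(μ, σ) ≤ ε = E(μ, σ₀)` forces `σ ≤ σ₀`. The quartiles of `C e^{σZ}` are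
`C e^{±σq}`, since `Φ(-q) = 1/4`, so the interquartile range is `2C sinh(σq) ≤ 2C sinh(qσ₀)`.
-/

open MeasureTheory ProbabilityTheory
open scoped ENNReal

/-- The standard normal cumulative distribution function. -/
noncomputable def Phi (x : ℝ) : ℝ :=
  ∫ t in Set.Iic x, Real.exp (-t^2/2) / Real.sqrt (2 * Real.pi)

open Set Real

lemma Phi_eq_cdf_gaussianReal : Phi = cdf (gaussianReal 0 1) := by
  ext x
  rw [cdf_eq_real, measureReal_def, gaussianReal_apply_eq_integral 0 one_ne_zero,
    ENNReal.toReal_ofReal (setIntegral_nonneg measurableSet_Iic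
      fun t _ => gaussianPDFReal_nonneg 0 1 t)]
  refine setIntegral_congr_fun measurableSet_Iic fun t _ => ?_
  simp [gaussianPDFReal, div_eq_inv_mul]

lemma Phi_strictMono : StrictMono Phi := by
  intro a b hab
  have hpos : 0 < gaussianReal 0 1 (Ioc a b) :=
    (gaussianReal_absolutelyContinuous' 0 one_ne_zero).pos_mono (by simpa using hab)
  rw [← measure_cdf (gaussianReal 0 1), StieltjesFunction.measure_Ioc, ENNReal.ofReal_pos] at hpos
  rw [Phi_eq_cdf_gaussianReal]
  linarith

lemma Phi_neg (x : ℝ) : Phi (-x) = 1 - Phi x := by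
  have := nullSingletonClass_gaussianReal (μ := 0) one_ne_zero
  have hIic : gaussianReal 0 1 (Iic (-x)) = gaussianReal 0 1 (Ici x) := by
    conv_lhs => rw [← neg_zero, ← gaussianReal_map_neg]
    rw [Measure.map_apply measurable_neg measurableSet_Iic]
    congr 1; ext t; simp
  rw [Phi_eq_cdf_gaussianReal, cdf_eq_real, cdf_eq_real, measureReal_def, hIic, ← compl_Iio,
    prob_compl_eq_one_sub measurableSet_Iio, measure_congr Iio_ae_eq_Iic,
    ENNReal.toReal_sub_of_le prob_le_one ENNReal.one_ne_top, ENNReal.toReal_one, measureReal_def]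

lemma Phi_nonneg (x : ℝ) : 0 ≤ Phi x := Phi_eq_cdf_gaussianReal ▸ cdf_nonneg _ x
lemma Phi_le_one (x : ℝ) : Phi x ≤ 1 := Phi_eq_cdf_gaussianReal ▸ cdf_le_one _ x

lemma Phi_pos (x : ℝ) : 0 < Phi x := (Phi_nonneg (x - 1)).trans_lt (Phi_strictMono (by linarith))

lemma intervalIntegrable_Phi_comp {h : ℝ → ℝ} (hh : Measurable h) (a b : ℝ) :
    IntervalIntegrable (fun u => Phi (h u)) volume a b := by
  refine (intervalIntegrable_const (c := (1 : ℝ))).mono_fun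
    (Phi_strictMono.monotone.measurable.comp hh).aestronglyMeasurable (ae_of_all _ fun u => ?_)
  simp [abs_of_nonneg (Phi_nonneg _), Phi_le_one]

/-- The unconditional error `E(μ, σ)`. -/
noncomputable def unconditionalError (μ σ : ℝ) : ℝ :=
  ∫ u in (0 : ℝ)..1, Phi (-|μ - log u| / σ)

lemma unconditionalError_strictMonoOn (μ : ℝ) :
    StrictMonoOn (unconditionalError μ) (Ioi 0) := by
  intro σ (hσ : 0 < σ) τ _ hστ
  have hmeas : Measurable fun u => -|μ - log u| := (measurable_const.sub measurable_log).abs.neg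
  have hle (u : ℝ) : -|μ - log u| / σ ≤ -|μ - log u| / τ := by
    rw [neg_div, neg_div, neg_le_neg_iff]
    exact div_le_div_of_nonneg_left (abs_nonneg _) hσ hστ.le
  have hlt (u : ℝ) (hu : log u ≠ μ) : -|μ - log u| / σ < -|μ - log u| / τ := by
    rw [neg_div, neg_div, neg_lt_neg_iff]
    exact div_lt_div_of_pos_left (abs_pos.2 (sub_ne_zero.2 hu.symm)) hσ hστ
  refine intervalIntegral.integral_lt_integral_of_ae_le_of_measure_setOfPred_lt_ne_zero
    zero_le_one (intervalIntegrable_Phi_comp (hmeas.div_const σ) 0 1)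
    (intervalIntegrable_Phi_comp (hmeas.div_const τ) 0 1)
    (ae_of_all _ fun u => Phi_strictMono.monotone (hle u)) ?_
  have hae : ∀ᵐ u ∂volume.restrict (Ioc (0 : ℝ) 1),
      Phi (-|μ - log u| / σ) < Phi (-|μ - log u| / τ) := by
    filter_upwards [ae_restrict_mem measurableSet_Ioc,
      ae_restrict_of_ae (Measure.ae_ne volume (exp μ))] with u hu hne
    exact Phi_strictMono (hlt u fun h => hne (h ▸ (exp_log hu.1).symm))
  have : (ae (volume.restrict (Ioc (0 : ℝ) 1))).NeBot := ae_neBot.2 (by simp)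
  exact frequently_ae_iff.1 hae.frequently

lemma preimage_const_mul_exp_Iic {C σ x : ℝ} (hC : 0 < C) (hσ : 0 < σ) (hx : 0 < x) :
    (fun z => C * exp (σ * z)) ⁻¹' Iic x = Iic (log (x / C) / σ) := by
  ext z
  simp only [mem_preimage, mem_Iic]
  rw [le_div_iff₀ hσ, mul_comm z, le_log_iff_exp_le (div_pos hx hC), le_div_iff₀ hC, mul_comm]

lemma eq_const_mul_exp_of_map_Iic_eq_Phi {C σ x p : ℝ} (hC : 0 < C) (hσ : 0 < σ)
    (hx : ((gaussianReal 0 1).map (fun z => C * exp (σ * z)) (Iic x)).toReal = Phi p) :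
    x = C * exp (σ * p) := by
  rw [Measure.map_apply (by fun_prop) measurableSet_Iic] at hx
  have hxpos : 0 < x := by
    by_contra! hx0
    have hempty : (fun z => C * exp (σ * z)) ⁻¹' Iic x = ∅ :=
      eq_empty_of_forall_notMem fun z hz => (hx0.trans_lt (by positivity)).not_ge hz
    rw [hempty, measure_empty, ENNReal.toReal_zero] at hx
    exact (Phi_pos p).ne hx
  rw [preimage_const_mul_exp_Iic hC hσ hxpos, ← measureReal_def, ← cdf_eq_real,
    ← Phi_eq_cdf_gaussianReal] at hx
  have hlog : log (x / C) = σ * p := by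
    rw [← Phi_strictMono.injective hx]; field_simp
  rw [← hlog, exp_log (div_pos hxpos hC), mul_div_cancel₀ _ hC.ne']

theorem iqr_bound_under_error_tolerance_general (μ ε σ σ₀ C q : ℝ)
    (hσ : 0 < σ) (hσ₀ : 0 < σ₀)
    (h₀ : (∫ u in (0:ℝ)..1, Phi (-|μ - Real.log u| / σ₀)) = ε)
    (h₁ : (∫ u in (0:ℝ)..1, Phi (-|μ - Real.log u| / σ)) ≤ ε)
    (hC : 0 < C) (hq : Phi q = 3/4)
    (x₁ x₂ : ℝ)
    (hx₁ : ((gaussianReal 0 1).map (fun z => C * Real.exp (σ * z)) (Set.Iic x₁)).toReal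
      = 3/4)
    (hx₂ : ((gaussianReal 0 1).map (fun z => C * Real.exp (σ * z)) (Set.Iic x₂)).toReal
      = 1/4) :
    x₁ - x₂ ≤ 2 * C * Real.sinh (q * σ₀) := by
  have hσσ₀ : σ ≤ σ₀ :=
    ((unconditionalError_strictMonoOn μ).le_iff_le hσ hσ₀).1 (h₁.trans h₀.ge)
  have hPhi_neg_q : Phi (-q) = 1 / 4 := by rw [Phi_neg, hq]; norm_num
  have hneg_q_lt : -q < q := Phi_strictMono.lt_iff_lt.1 (by rw [hPhi_neg_q, hq]; norm_num)
  rw [eq_const_mul_exp_of_map_Iic_eq_Phi hC hσ (hx₁.trans hq.symm),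
    eq_const_mul_exp_of_map_Iic_eq_Phi hC hσ (hx₂.trans hPhi_neg_q.symm)]
  calc C * exp (σ * q) - C * exp (σ * -q) = 2 * C * sinh (σ * q) := by
        rw [sinh_eq, mul_neg]; ring
    _ ≤ 2 * C * sinh (q * σ₀) := by
        gcongr
        exact sinh_le_sinh.2 (by nlinarith)

/-- If the unconditional error at `σ` is at most `ε` and `σ₀` attains error
exactly `ε`, then the interquartile range of `X = C e^{σZ}` is bounded by
`2C sinh(q σ₀)`, where `Φ(q) = 3/4`. -/
theorem iqr_bound_under_error_tolerance (μ ε σ σ₀ C q : ℝ)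
    (hε : 0 < ε) (hε' : ε < 1/2) (hσ : 0 < σ) (hσ₀ : 0 < σ₀)
    (h₀ : (∫ u in (0:ℝ)..1, Phi (-|μ - Real.log u| / σ₀)) = ε)
    (h₁ : (∫ u in (0:ℝ)..1, Phi (-|μ - Real.log u| / σ)) ≤ ε)
    (hC : 0 < C) (hq : Phi q = 3/4)
    (x₁ x₂ : ℝ)
    (hx₁ : ((gaussianReal 0 1).map (fun z => C * Real.exp (σ * z)) (Set.Iic x₁)).toReal
      = 3/4)
    (hx₂ : ((gaussianReal 0 1).map (fun z => C * Real.exp (σ * z)) (Set.Iic x₂)).toReal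
      = 1/4) :
    x₁ - x₂ ≤ 2 * C * Real.sinh (q * σ₀) :=
  iqr_bound_under_error_tolerance_general μ ε σ σ₀ C q hσ hσ₀ h₀ h₁ hC hq x₁ x₂ hx₁ hx₂
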